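/- There exist points x, y ∈ X with x_0 ≠ y_0 and x_i = y_i for all i ≠ 0, such that for every ε > 0 there exists N with the following property: for all n ≥ N and all k ∈ ℤ, either d(σ^k(w_{2n}^ℤ), σ^k(w_{2n+1}^ℤ)) < ε, or there exists m ∈ ℤ with d(σ^k(w_{2n}^ℤ), σ^m(x)) < ε and d(σ^k(w_{2n+1}^ℤ), σ^m(y)) < ε. Here d is the metric d(z, z') = 2^{−min{|i| : z_i ≠ z'_i}} (and d(z,z) = 0) on {0,1}^ℤ. -/
import Mathlib


/-- The shift map σ on the full shift `{0,1}^ℤ`, `σ(x)_i = x_{i+1}`. -/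
def shift (x : ℤ → Bool) : ℤ → Bool := fun i => x (i + 1)

/-- The iterate `σ^k` of the shift, for `k ∈ ℤ`. -/
def shiftZ (k : ℤ) (x : ℤ → Bool) : ℤ → Bool := fun i => x (i + k)

/-- `wlist n` is the list `[w_0, w_1, …, w_{2n+1}]` of the words of the construction:
`w_0 = 0`, `w_1 = 1`, and for `n ≥ 1`, `a ∈ {0,1}`,
`w_{2n+a} = w_{2n-2} w_a w_{2n-2} ∏_{k=0}^{2n-1} (w_k^n w_{2n-2})`. -/
def wlist : ℕ → List (List Bool)
  | 0 => [[false], [true]]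
  | n + 1 =>
    let prev := wlist n
    let w : ℕ → List Bool := fun k => prev.getD k []
    let base := w (2 * n)
    let tail := (List.range (2 * n + 2)).flatMap
      (fun k => (List.replicate (n + 1) (w k)).flatten ++ base)
    prev ++ [base ++ w 0 ++ base ++ tail, base ++ w 1 ++ base ++ tail]

/-- The word `w_n`. -/
def wrd (n : ℕ) : List Bool := (wlist n).getD n []

/-- The periodic point `u^ℤ` associated to a nonempty word `u`;
it satisfies `(u^ℤ)_{m|u|+i} = u_i` for all `m ∈ ℤ`, `0 ≤ i < |u|`. -/
def perPt (u : List Bool) : ℤ → Bool := fun i => u.getD ((i % (u.length : ℤ)).toNat) false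

/-- The union of the shift orbits of the points `w_n^ℤ`. -/
def Xgen : Set (ℤ → Bool) := {x | ∃ (n : ℕ) (k : ℤ), x = shiftZ k (perPt (wrd n))}

/-- The subshift `X`: the smallest subshift containing the points `w_n^ℤ`,
i.e. the closure of the union of their shift orbits. -/
def XX : Set (ℤ → Bool) := closure Xgen

/-- The word `u` occurs as a (contiguous) subword of the point `x`. -/
def occursIn (u : List Bool) (x : ℤ → Bool) : Prop :=
  ∃ i : ℤ, ∀ j : ℕ, j < u.length → x (i + (j : ℤ)) = u.getD j false

open Classical in
/-- The metric `d(z,z') = 2^{-min{|i| : z_i ≠ z'_i}}` (and `d(z,z) = 0`) on `{0,1}^ℤ`. -/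
noncomputable def dist01 (z z' : ℤ → Bool) : ℝ :=
  if z = z' then 0
  else (2 : ℝ) ^ (-((sInf {m : ℕ | ∃ i : ℤ, i.natAbs = m ∧ z i ≠ z' i} : ℕ) : ℤ))

-- ===== auxiliary development =====

lemma wlist_length (n : ℕ) : (wlist n).length = 2*n+2 := by
  induction n with
  | zero => rfl
  | succ n ih => simp [wlist, ih]; ring

lemma wlist_prefix {n m : ℕ} (h : n ≤ m) : wlist n <+: wlist m := by
  induction m with
  | zero => simp_all
  | succ m ih =>
    rcases Nat.lt_or_ge n (m+1) with h' | h'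
    · exact (ih (by omega)).trans ⟨_, rfl⟩
    · have : n = m+1 := by omega
      subst this; exact List.prefix_rfl

lemma getD_prefix {l₁ l₂ : List (List Bool)} (h : l₁ <+: l₂) {k : ℕ} (hk : k < l₁.length) :
    l₂.getD k [] = l₁.getD k [] := by
  obtain ⟨t, rfl⟩ := h
  exact List.getD_append _ _ _ _ hk

lemma getD_wlist {k n : ℕ} (h : k < 2*n+2) : (wlist n).getD k [] = wrd k := by
  unfold wrd
  rcases le_or_gt k n with h' | h'
  · rw [getD_prefix (wlist_prefix h') (by rw [wlist_length]; omega)]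
  · rw [getD_prefix (l₁ := wlist n) (wlist_prefix (le_of_lt h')) (by rw [wlist_length]; omega)]

def Twd (n : ℕ) : List Bool :=
  (List.range (2*n+2)).flatMap (fun k => (List.replicate (n+1) (wrd k)).flatten ++ wrd (2*n))

lemma wlist_succ (n : ℕ) : wlist (n+1) =
    wlist n ++ [wrd (2*n) ++ wrd 0 ++ wrd (2*n) ++ Twd n,
                wrd (2*n) ++ wrd 1 ++ wrd (2*n) ++ Twd n] := by
  show (wlist n) ++ _ = _
  have hb : (wlist n).getD (2*n) [] = wrd (2*n) := getD_wlist (by omega)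
  have h0 : (wlist n).getD 0 [] = wrd 0 := getD_wlist (by omega)
  have h1 : (wlist n).getD 1 [] = wrd 1 := getD_wlist (by omega)
  have ht : (List.range (2 * n + 2)).flatMap
      (fun k => (List.replicate (n + 1) ((wlist n).getD k [])).flatten ++ wrd (2*n)) = Twd n := by
    unfold Twd
    rw [List.flatMap, List.flatMap]
    congr 1
    apply List.map_congr_left
    intro k hk
    rw [List.mem_range] at hk
    rw [getD_wlist hk]
  beta_reduce
  rw [hb, h0, h1, ht]

lemma wrd_even (n : ℕ) : wrd (2*n+2) = wrd (2*n) ++ wrd 0 ++ wrd (2*n) ++ Twd n := by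
  have : wrd (2*n+2) = (wlist (n+1)).getD (2*n+2) [] := (getD_wlist (by omega)).symm
  rw [this, wlist_succ, List.getD_append_right _ _ _ _ (by rw [wlist_length])]
  rw [wlist_length]
  have h2 : 2*n+2 - (2*n+2) = 0 := by omega
  rw [h2]
  rfl

lemma wrd_odd (n : ℕ) : wrd (2*n+3) = wrd (2*n) ++ wrd 1 ++ wrd (2*n) ++ Twd n := by
  have : wrd (2*n+3) = (wlist (n+1)).getD (2*n+3) [] := (getD_wlist (by omega)).symm
  rw [this, wlist_succ, List.getD_append_right _ _ _ _ (by rw [wlist_length]; omega)]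
  rw [wlist_length]
  have h2 : 2*n+3 - (2*n+2) = 1 := by omega
  rw [h2]
  rfl

lemma wrd0 : wrd 0 = [false] := rfl
lemma wrd1 : wrd 1 = [true] := rfl


lemma getD_suffix {α : Type*} {l₁ l₂ : List α} (d : α) (h : l₁ <:+ l₂) {r : ℕ}
    (h1 : 1 ≤ r) (h2 : r ≤ l₁.length) :
    l₂.getD (l₂.length - r) d = l₁.getD (l₁.length - r) d := by
  obtain ⟨t, rfl⟩ := h
  rw [List.length_append, List.getD_append_right _ _ _ _ (by omega)]
  congr 1
  omega

lemma getD_prefix' {α : Type*} {l₁ l₂ : List α} (d : α) (h : l₁ <+: l₂) {k : ℕ}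
    (hk : k < l₁.length) : l₂.getD k d = l₁.getD k d := by
  obtain ⟨t, rfl⟩ := h
  exact List.getD_append _ _ _ _ hk

lemma getD_shape_mid {B R : List Bool} (a : Bool) :
    (B ++ ([a] ++ R)).getD B.length false = a := by
  rw [List.getD_append_right _ _ _ _ le_rfl]
  simp

lemma getD_shape_left {B R : List Bool} {j : ℕ} (h : j < B.length) :
    (B ++ R).getD j false = B.getD j false := List.getD_append _ _ _ _ h

lemma getD_shape_right {B R : List Bool} (a : Bool) {j : ℕ} (h : B.length < j) :
    (B ++ ([a] ++ R)).getD j false = R.getD (j - B.length - 1) false := by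
  rw [List.getD_append_right _ _ _ _ (by omega), List.getD_append_right _ _ _ _ (by simp; omega)]
  norm_num

lemma getD_shape_ne {B R : List Bool} (a a' : Bool) {j : ℕ} (h : j ≠ B.length) :
    (B ++ ([a] ++ R)).getD j false = (B ++ ([a'] ++ R)).getD j false := by
  rcases Nat.lt_or_ge j B.length with h' | h'
  · rw [getD_shape_left h', getD_shape_left h']
  · have h'' : B.length < j := by omega
    rw [getD_shape_right a h'', getD_shape_right a' h'']

lemma wrd_evenR (n : ℕ) : wrd (2*n+2) = wrd (2*n) ++ ([false] ++ (wrd (2*n) ++ Twd n)) := by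
  rw [wrd_even, wrd0]
  simp [List.append_assoc]

lemma wrd_oddR (n : ℕ) : wrd (2*n+3) = wrd (2*n) ++ ([true] ++ (wrd (2*n) ++ Twd n)) := by
  rw [wrd_odd, wrd1]
  simp [List.append_assoc]

/-- The shape of the words `w_{2n+2}` (a = false) and `w_{2n+3}` (a = true). -/
lemma wrd_shape (n : ℕ) (a : Bool) :
    wrd (2*n+2+cond a 1 0) = wrd (2*n) ++ ([a] ++ (wrd (2*n) ++ Twd n)) := by
  cases a
  · simpa using wrd_evenR n
  · simpa using wrd_oddR n

lemma len_shape (n : ℕ) (a : Bool) :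
    (wrd (2*n+2+cond a 1 0)).length
      = 2 * (wrd (2*n)).length + 1 + (Twd n).length := by
  rw [wrd_shape]
  simp
  try omega

lemma len_even_succ (n : ℕ) : wrd (2*(n+1)) = wrd (2*n+2) := by norm_num; ring_nf

lemma pref_even (n : ℕ) : wrd (2*n) <+: wrd (2*n+2) := by
  rw [wrd_evenR]
  exact List.prefix_append _ _

lemma suff_even (n : ℕ) : wrd (2*n) <:+ wrd (2*n+2) := by
  rw [wrd_evenR]
  have h1 : wrd (2*n) <:+ Twd n := by
    unfold Twd
    rw [show 2*n+2 = (2*n+1)+1 from rfl, List.range_succ, List.flatMap_append]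
    have h2 : ([2*n+1].flatMap fun k => (List.replicate (n+1) (wrd k)).flatten ++ wrd (2*n))
        = (List.replicate (n+1) (wrd (2*n+1))).flatten ++ wrd (2*n) := by simp
    rw [h2]
    exact (List.suffix_append _ _).trans (List.suffix_append _ _)
  refine h1.trans ?_
  exact ((List.suffix_append _ _).trans (List.suffix_append _ _)).trans (List.suffix_append _ _)

lemma pref_even_le {n m : ℕ} (h : n ≤ m) : wrd (2*n) <+: wrd (2*m) := by
  induction m, h using Nat.le_induction with
  | base => exact List.prefix_rfl
  | succ m hm ih => exact ih.trans (by rw [len_even_succ]; exact pref_even m)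

lemma suff_even_le {n m : ℕ} (h : n ≤ m) : wrd (2*n) <:+ wrd (2*m) := by
  induction m, h using Nat.le_induction with
  | base => exact List.suffix_rfl
  | succ m hm ih => exact ih.trans (by rw [len_even_succ]; exact suff_even m)

lemma len_even_lt (n : ℕ) : n < (wrd (2*n)).length := by
  induction n with
  | zero => simp [wrd0]
  | succ n ih =>
    rw [len_even_succ]
    have := len_shape n false
    simp at this
    omega

lemma len_even_mono {n m : ℕ} (h : n ≤ m) : (wrd (2*n)).length ≤ (wrd (2*m)).length :=
  (pref_even_le h).length_le

lemma perPt_congr {u : List Bool} {a b : ℤ} (h : a % u.length = b % u.length) :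
    perPt u a = perPt u b := by unfold perPt; rw [h]

lemma perPt_eq_getD {u : List Bool} {i : ℤ} (h0 : 0 ≤ i) (h1 : i < u.length) :
    perPt u i = u.getD i.toNat false := by
  unfold perPt
  rw [Int.emod_eq_of_lt h0 h1]

lemma stab_step (a : Bool) (n : ℕ) (j : ℤ) (hj : j.natAbs < (wrd (2*n)).length) :
    perPt (wrd (2*n+2+cond a 1 0)) (j + ((wrd (2*n)).length : ℤ)) =
      perPt (wrd (2*(n+1)+2+cond a 1 0)) (j + ((wrd (2*(n+1))).length : ℤ)) := by
  have hBB' : wrd (2*(n+1)) = wrd (2*n+2) := len_even_succ n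
  have pref : wrd (2*n) <+: wrd (2*(n+1)) := pref_even_le (Nat.le_succ n)
  have suff : wrd (2*n) <:+ wrd (2*(n+1)) := suff_even_le (Nat.le_succ n)
  have hlen : (wrd (2*n)).length ≤ (wrd (2*(n+1))).length := pref.length_le
  have hlen1 : (wrd (2*n+2+cond a 1 0)).length = 2*(wrd (2*n)).length+1+(Twd n).length :=
    len_shape n a
  have hlen2 : (wrd (2*(n+1)+2+cond a 1 0)).length
      = 2*(wrd (2*(n+1))).length+1+(Twd (n+1)).length := len_shape (n+1) a
  have e1 : perPt (wrd (2*n+2+cond a 1 0)) (j + ((wrd (2*n)).length : ℤ))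
      = (wrd (2*n+2+cond a 1 0)).getD (j + ((wrd (2*n)).length : ℤ)).toNat false :=
    perPt_eq_getD (by omega) (by push_cast [hlen1]; omega)
  have e2 : perPt (wrd (2*(n+1)+2+cond a 1 0)) (j + ((wrd (2*(n+1))).length : ℤ))
      = (wrd (2*(n+1)+2+cond a 1 0)).getD (j + ((wrd (2*(n+1))).length : ℤ)).toNat false :=
    perPt_eq_getD (by omega) (by push_cast [hlen2]; omega)
  rw [e1, e2, wrd_shape n a, wrd_shape (n+1) a]
  rcases lt_trichotomy j 0 with hj0 | hj0 | hj0
  · have hr1 : 1 ≤ j.natAbs := by omega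
    have i1 : (j + ((wrd (2*n)).length : ℤ)).toNat = (wrd (2*n)).length - j.natAbs := by omega
    have i2 : (j + ((wrd (2*(n+1))).length : ℤ)).toNat
        = (wrd (2*(n+1))).length - j.natAbs := by omega
    rw [i1, i2, getD_shape_left (by omega), getD_shape_left (by omega)]
    exact (getD_suffix false suff hr1 (by omega)).symm
  · subst hj0
    have i1 : ((0:ℤ) + ((wrd (2*n)).length : ℤ)).toNat = (wrd (2*n)).length := by omega
    have i2 : ((0:ℤ) + ((wrd (2*(n+1))).length : ℤ)).toNat = (wrd (2*(n+1))).length := by omega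
    rw [i1, i2, getD_shape_mid a, getD_shape_mid a]
  · have i1 : (j + ((wrd (2*n)).length : ℤ)).toNat = (wrd (2*n)).length + j.toNat := by omega
    have i2 : (j + ((wrd (2*(n+1))).length : ℤ)).toNat
        = (wrd (2*(n+1))).length + j.toNat := by omega
    rw [i1, i2, getD_shape_right a (by omega), getD_shape_right a (by omega)]
    have e3 : (wrd (2*n)).length + j.toNat - (wrd (2*n)).length - 1 = j.toNat - 1 := by omega
    have e4 : (wrd (2*(n+1))).length + j.toNat - (wrd (2*(n+1))).length - 1 = j.toNat - 1 := by
      omega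
    rw [e3, e4, getD_shape_left (by omega), getD_shape_left (by omega)]
    exact (getD_prefix' false pref (by omega)).symm

lemma stab (a : Bool) {n m : ℕ} (h : n ≤ m) (j : ℤ) (hj : j.natAbs < (wrd (2*n)).length) :
    perPt (wrd (2*n+2+cond a 1 0)) (j + ((wrd (2*n)).length : ℤ)) =
      perPt (wrd (2*m+2+cond a 1 0)) (j + ((wrd (2*m)).length : ℤ)) := by
  induction m, h using Nat.le_induction with
  | base => rfl
  | succ m hm ih =>
    rw [ih]
    exact stab_step a m j (lt_of_lt_of_le hj (len_even_mono hm))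

/-- The limit points: `ptx false = x`, `ptx true = y`. -/
def ptx (a : Bool) : ℤ → Bool :=
  fun j => perPt (wrd (2*j.natAbs+2+cond a 1 0)) (j + ((wrd (2*j.natAbs)).length : ℤ))

lemma ptx_eq (a : Bool) (n : ℕ) (j : ℤ) (hj : j.natAbs < (wrd (2*n)).length) :
    ptx a j = perPt (wrd (2*n+2+cond a 1 0)) (j + ((wrd (2*n)).length : ℤ)) := by
  have h0 : j.natAbs < (wrd (2*j.natAbs)).length := len_even_lt j.natAbs
  rcases le_total j.natAbs n with h | h
  · exact stab a h j h0
  · exact (stab a h j hj).symm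

lemma ptx_zero (a : Bool) : ptx a 0 = a := by
  have h := ptx_eq a 0 0 (by simpa using len_even_lt 0)
  rw [h, perPt_eq_getD (by simp [wrd0]) (by rw [len_shape 0 a]; push_cast [wrd0]; omega)]
  rw [wrd_shape 0 a]
  have : ((0:ℤ) + ((wrd (2*0)).length : ℤ)).toNat = (wrd (2*0)).length := by omega
  rw [this, getD_shape_mid a]

lemma ptx_ne {j : ℤ} (hj : j ≠ 0) : ptx false j = ptx true j := by
  set n := j.natAbs with hn
  have h0 : j.natAbs < (wrd (2*n)).length := len_even_lt n
  rw [ptx_eq false n j h0, ptx_eq true n j h0]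
  have hlen1 := len_shape n false
  have hlen2 := len_shape n true
  rw [perPt_eq_getD (by omega) (by push_cast [hlen1]; omega),
      perPt_eq_getD (by omega) (by push_cast [hlen2]; omega)]
  rw [wrd_shape n false, wrd_shape n true]
  apply getD_shape_ne
  omega

lemma ptx_mem (a : Bool) : ptx a ∈ XX := by
  unfold XX
  apply mem_closure_of_tendsto
    (f := fun n : ℕ => shiftZ ((wrd (2*n)).length : ℤ) (perPt (wrd (2*n+2+cond a 1 0))))
    (b := Filter.atTop)
  · rw [tendsto_pi_nhds]
    intro j
    apply tendsto_nhds_of_eventually_eq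
    filter_upwards [Filter.eventually_ge_atTop j.natAbs] with n hn
    exact (ptx_eq a n j (lt_of_le_of_lt hn (len_even_lt n))).symm
  · exact Filter.Eventually.of_forall fun n => ⟨2*n+2+cond a 1 0, ((wrd (2*n)).length : ℤ), rfl⟩

lemma dist01_le {z z' : ℤ → Bool} {M : ℕ} (h : ∀ i : ℤ, i.natAbs < M → z i = z' i) :
    dist01 z z' ≤ (2:ℝ) ^ (-(M:ℤ)) := by
  unfold dist01
  split
  · positivity
  · rename_i hne
    have hMS : M ≤ sInf {m : ℕ | ∃ i : ℤ, i.natAbs = m ∧ z i ≠ z' i} := by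
      apply le_csInf
      · have : ∃ i, z i ≠ z' i := by
          by_contra hc
          push_neg at hc
          exact hne (funext hc)
        obtain ⟨i, hi⟩ := this
        exact ⟨i.natAbs, i, rfl, hi⟩
      · rintro b ⟨i, rfl, hib⟩
        by_contra hb
        push_neg at hb
        exact hib (h i hb)
    apply zpow_le_zpow_right₀ one_le_two
    omega

lemma exists_M (ε : ℝ) (hε : 0 < ε) : ∃ M : ℕ, (2:ℝ) ^ (-(M:ℤ)) < ε := by
  obtain ⟨M, hM⟩ := exists_pow_lt_of_lt_one hε (by norm_num : (1:ℝ)/2 < 1)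
  refine ⟨M, ?_⟩
  rw [zpow_neg, zpow_natCast]
  rwa [one_div, inv_pow] at hM


/-- There are points `x, y ∈ X` differing exactly at the origin such that for every
`ε > 0`, for all large `n` and every `k ∈ ℤ`, the pair `(σ^k(w_{2n}^ℤ), σ^k(w_{2n+1}^ℤ))`
is either `ε`-close to the diagonal or `ε`-close to a common shift of the pair `(x, y)`. -/
theorem stmt13 :
    ∃ x ∈ XX, ∃ y ∈ XX, x 0 ≠ y 0 ∧ (∀ i : ℤ, i ≠ 0 → x i = y i) ∧
      ∀ ε : ℝ, 0 < ε → ∃ N : ℕ, ∀ n : ℕ, N ≤ n → ∀ k : ℤ,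
        dist01 (shiftZ k (perPt (wrd (2 * n)))) (shiftZ k (perPt (wrd (2 * n + 1)))) < ε ∨
        ∃ m : ℤ,
          dist01 (shiftZ k (perPt (wrd (2 * n)))) (shiftZ m x) < ε ∧
          dist01 (shiftZ k (perPt (wrd (2 * n + 1)))) (shiftZ m y) < ε := by
  refine ⟨ptx false, ptx_mem false, ptx true, ptx_mem true, ?_, fun i hi => ptx_ne hi, ?_⟩
  · rw [ptx_zero, ptx_zero]; simp
  · intro ε hε
    obtain ⟨M, hM⟩ := exists_M ε hε
    refine ⟨2*M+2, fun n hn k => ?_⟩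
    obtain ⟨m, rfl⟩ : ∃ m, n = m + 1 := ⟨n-1, by omega⟩
    rw [show 2*(m+1) = 2*m+2 by ring, show 2*m+2+1 = 2*m+3 by ring]
    have hpm : 2*M + 1 ≤ (wrd (2*m)).length := by
      have := len_even_lt m
      omega
    have hL1 : (wrd (2*m+2)).length = 2*(wrd (2*m)).length+1+(Twd m).length :=
      len_shape m false
    have hL2 : (wrd (2*m+3)).length = 2*(wrd (2*m)).length+1+(Twd m).length :=
      len_shape m true
    have hLeq : ((wrd (2*m+3)).length : ℤ) = ((wrd (2*m+2)).length : ℤ) := by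
      rw [hL1, hL2]
    have hpL : ((wrd (2*m)).length : ℤ) < ((wrd (2*m+2)).length : ℤ) := by
      push_cast [hL1]; omega
    by_cases hex : ∃ i0 : ℤ, i0.natAbs < M ∧
        (i0 + k) % ((wrd (2*m+2)).length : ℤ) = ((wrd (2*m)).length : ℤ)
    · obtain ⟨i0, hi0M, hi0⟩ := hex
      right
      refine ⟨-i0, lt_of_le_of_lt (dist01_le ?_) hM, lt_of_le_of_lt (dist01_le ?_) hM⟩
      · intro i hi
        show perPt (wrd (2*m+2)) (i + k) = ptx false (i + -i0)
        have hjp : (i + -i0).natAbs < (wrd (2*m)).length := by omega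
        rw [ptx_eq false m (i + -i0) hjp]
        show perPt (wrd (2*m+2)) (i + k)
            = perPt (wrd (2*m+2)) ((i + -i0) + ((wrd (2*m)).length : ℤ))
        apply perPt_congr
        conv_lhs => rw [show i + k = (i + -i0) + (i0 + k) by ring]
        rw [Int.add_emod (i + -i0) (i0 + k), hi0,
            Int.add_emod (i + -i0) ((wrd (2*m)).length : ℤ),
            Int.emod_eq_of_lt (by positivity) hpL]
      · intro i hi
        show perPt (wrd (2*m+3)) (i + k) = ptx true (i + -i0)
        have hjp : (i + -i0).natAbs < (wrd (2*m)).length := by omega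
        rw [ptx_eq true m (i + -i0) hjp]
        show perPt (wrd (2*m+3)) (i + k)
            = perPt (wrd (2*m+3)) ((i + -i0) + ((wrd (2*m)).length : ℤ))
        apply perPt_congr
        rw [hLeq]
        conv_lhs => rw [show i + k = (i + -i0) + (i0 + k) by ring]
        rw [Int.add_emod (i + -i0) (i0 + k), hi0,
            Int.add_emod (i + -i0) ((wrd (2*m)).length : ℤ),
            Int.emod_eq_of_lt (by positivity) hpL]
    · left
      refine lt_of_le_of_lt (dist01_le (M := M) ?_) hM
      intro i hi
      show perPt (wrd (2*m+2)) (i + k) = perPt (wrd (2*m+3)) (i + k)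
      have key : ∀ q : ℕ, q ≠ (wrd (2*m)).length →
          (wrd (2*m+2)).getD q false = (wrd (2*m+3)).getD q false := by
        intro q hq
        rw [wrd_evenR m, wrd_oddR m]
        exact getD_shape_ne false true hq
      have hq : ((i + k) % ((wrd (2*m+2)).length : ℤ)).toNat ≠ (wrd (2*m)).length := by
        intro hc
        apply hex
        refine ⟨i, hi, ?_⟩
        have h0 : 0 ≤ (i + k) % ((wrd (2*m+2)).length : ℤ) :=
          Int.emod_nonneg _ (by omega)
        omega
      unfold perPt
      rw [hLeq]
      exact key _ hq
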